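/- arXiv:1506.03916 — 4 statements merged into one kernel-verified Lean document; each statement's English description precedes it below -/
import Mathlib

section
/- Let f : ℕ → ℕ satisfy f(0) = 0 and f(c+1) ≤ f(c) + 1 for all c. Let n ≥ 1 and r be integers with 0 ≤ r ≤ n − 1, and set n' = n − r. For any nonnegative integers c₁, …, c_n with ∑ⱼ cⱼ = n − 1, there exist nonnegative integers c₁', …, c_{n'}' with ∑ⱼ cⱼ' = n' − 1 such that ∑_{j=1}^{n} f(cⱼ) ≤ ∑_{j=1}^{n'} f(cⱼ') + r. -/
/-!
Read `c₁, …, cₙ` as a multiset `s` with `card s = s.sum + 1`. While `s.sum > 0`, such a multiset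
contains both a `0` and a positive entry `b + 1`; deleting the `0` and replacing `b + 1` by `b`
preserves the relation `card = sum + 1`, shortens `s` by one and, as `f 0 = 0` and
`f (b + 1) ≤ f b + 1`, lowers `∑ f` by at most one. Doing this `r` times gives the claim.
-/

open Finset

namespace Multiset

theorem zero_mem_of_sum_lt_card {s : Multiset ℕ} (h : s.sum < card s) : 0 ∈ s := by
  by_contra hs
  have hpos : ∀ x ∈ s, 1 ≤ x := fun x hx => Nat.one_le_iff_ne_zero.2 fun h0 => hs (h0 ▸ hx)
  have := card_nsmul_le_sum hpos
  rw [smul_eq_mul, mul_one] at this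
  omega

theorem exists_fin_map_univ_eq {α : Type*} {k : ℕ} (t : Multiset α) (h : card t = k) :
    ∃ c : Fin k → α, univ.val.map c = t := by
  obtain ⟨l, rfl⟩ : ∃ l : List α, (l : Multiset α) = t := ⟨t.toList, coe_toList t⟩
  rw [coe_card] at h
  subst h
  exact ⟨l.get, by rw [Fin.univ_val_map, List.ofFn_get]⟩

variable {f : ℕ → ℕ}

theorem exists_shrink_one (hf0 : f 0 = 0) (hf : ∀ c, f (c + 1) ≤ f c + 1) {s : Multiset ℕ}
    (hs : card s = s.sum + 1) (hpos : 0 < s.sum) :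
    ∃ t : Multiset ℕ, card t + 1 = card s ∧ card t = t.sum + 1 ∧
      (s.map f).sum ≤ (t.map f).sum + 1 := by
  obtain ⟨u, rfl⟩ := exists_cons_of_mem (zero_mem_of_sum_lt_card (s := s) (by omega))
  rw [sum_cons, zero_add] at hpos
  obtain ⟨a, ha, ha0⟩ : ∃ a ∈ u, a ≠ 0 := by
    by_contra! h
    exact hpos.ne' (sum_eq_zero h)
  obtain ⟨b, rfl⟩ := Nat.exists_eq_add_one_of_ne_zero ha0
  obtain ⟨v, rfl⟩ := exists_cons_of_mem ha
  refine ⟨b ::ₘ v, ?_, ?_, ?_⟩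
  · simp only [card_cons]
  · simp only [card_cons, sum_cons] at hs ⊢
    omega
  · simp only [map_cons, sum_cons, hf0]
    have := hf b
    omega

theorem exists_shrink (hf0 : f 0 = 0) (hf : ∀ c, f (c + 1) ≤ f c + 1) {s : Multiset ℕ}
    (hs : card s = s.sum + 1) {r : ℕ} (hr : r ≤ s.sum) :
    ∃ t : Multiset ℕ, card t + r = card s ∧ card t = t.sum + 1 ∧
      (s.map f).sum ≤ (t.map f).sum + r := by
  induction r with
  | zero => exact ⟨s, rfl, hs, le_rfl⟩
  | succ r ih =>
    obtain ⟨t, htcard, ht, hle⟩ := ih (by omega)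
    obtain ⟨t', ht'card, ht', hle'⟩ := exists_shrink_one hf0 hf ht (by omega)
    exact ⟨t', by omega, ht', by omega⟩

end Multiset

theorem stmt5 (f : ℕ → ℕ) (h0 : f 0 = 0)
    (hstep : ∀ c : ℕ, f (c + 1) ≤ f c + 1)
    (n r : ℕ) (hn : 1 ≤ n) (hr : r ≤ n - 1)
    (cs : Fin n → ℕ) (hsum : (∑ j, cs j) = n - 1) :
    ∃ cs' : Fin (n - r) → ℕ,
      (∑ j, cs' j) = (n - r) - 1 ∧
      (∑ j, f (cs j)) ≤ (∑ j, f (cs' j)) + r := by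
  set s := univ.val.map cs
  have hs_card : s.card = n := by simp [s]
  have hs_sum : s.sum = n - 1 := by rw [← hsum, sum_eq_multiset_sum]
  obtain ⟨t, ht_card, ht, hle⟩ := Multiset.exists_shrink h0 hstep (s := s) (r := r) (by omega) (by omega)
  obtain ⟨cs', rfl⟩ := Multiset.exists_fin_map_univ_eq t (k := n - r) (by omega)
  refine ⟨cs', ?_, ?_⟩
  · rw [sum_eq_multiset_sum]
    simp only [Multiset.card_map, card_val, card_univ, Fintype.card_fin] at ht
    omega
  · simpa only [sum_eq_multiset_sum, s, Multiset.map_map, Function.comp_def] using hle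
end

section
/- Let g ≥ 1 and b₁ < ⋯ < b_g be strictly increasing positive integers, and define f(c) = #{i : bᵢ ≤ c} for c ∈ ℕ. Let i₀ maximize i/bᵢ over i ∈ {1,…,g}. Then for every N ≥ 0 divisible by b_{i₀}, the maximum of ∑_{j=1}^{m} f(cⱼ) over all m ≥ 1 and nonnegative integers c₁, …, c_m with ∑ cⱼ ≤ N equals N·i₀/b_{i₀}. -/
/-!
Every threshold `bᵢ ≤ c` has index `i ≤ i₀ bᵢ / b_{i₀} ≤ i₀ c / b_{i₀}`, so `f c ≤ (i₀ / b_{i₀}) c`;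
summing over the parts bounds any total by `N i₀ / b_{i₀}`. Conversely `f (b_{i₀}) = i₀`, so
`N / b_{i₀}` parts equal to `b_{i₀}` (padded by one part `0` when `N = 0`) attain the bound.
-/

open Finset

def budgetedSums (f : ℕ → ℕ) (N : ℕ) : Set ℕ :=
  {S | ∃ m : ℕ, ∃ cs : Fin m → ℕ, 1 ≤ m ∧ (∑ j, cs j) ≤ N ∧ S = ∑ j, f (cs j)}

theorem sum_mul_le_of_forall_mul_le {f : ℕ → ℕ} {a d : ℕ} (hf : ∀ c, f c * d ≤ c * a)
    {m : ℕ} (cs : Fin m → ℕ) : (∑ j, f (cs j)) * d ≤ (∑ j, cs j) * a := by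
  simpa only [Finset.sum_mul] using Finset.sum_le_sum fun j _ => hf (cs j)

theorem isGreatest_budgetedSums {f : ℕ → ℕ} {a d N : ℕ} (hd : 0 < d) (hdN : d ∣ N)
    (hf : ∀ c, f c * d ≤ c * a) (hf0 : f 0 = 0) (hfd : f d = a) :
    IsGreatest (budgetedSums f N) (N / d * a) := by
  obtain ⟨q, rfl⟩ := hdN
  rw [Nat.mul_div_cancel_left q hd]
  constructor
  · refine ⟨q + 1, Fin.cons 0 fun _ => d, q.succ_pos, ?_, ?_⟩
    · simp [Fin.sum_univ_succ, mul_comm]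
    · simp [Fin.sum_univ_succ, hf0, hfd]
  · rintro S ⟨m, cs, -, hsum, rfl⟩
    refine Nat.le_of_mul_le_mul_right ?_ hd
    calc (∑ j, f (cs j)) * d ≤ (∑ j, cs j) * a := sum_mul_le_of_forall_mul_le hf cs
      _ ≤ d * q * a := Nat.mul_le_mul_right a hsum
      _ = q * a * d := by ring

def countLE (b : ℕ → ℕ) (g c : ℕ) : ℕ := #{i ∈ Icc 1 g | b i ≤ c}

section countLE

variable {b : ℕ → ℕ} {g : ℕ}

theorem countLE_zero (hpos : ∀ i, 1 ≤ i → i ≤ g → 0 < b i) : countLE b g 0 = 0 := by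
  refine card_eq_zero.2 (filter_eq_empty_iff.2 fun i hi => ?_)
  rw [mem_Icc] at hi
  exact (hpos i hi.1 hi.2).not_ge

theorem countLE_apply_of_strictMonoOn (hb : StrictMonoOn b (Set.Icc 1 g)) {k : ℕ}
    (hk : k ∈ Icc 1 g) : countLE b g (b k) = k := by
  have hk' : k ∈ Set.Icc 1 g := by simpa using hk
  have : {i ∈ Icc 1 g | b i ≤ b k} = Icc 1 k := by
    ext i
    simp only [mem_filter, mem_Icc]
    constructor
    · rintro ⟨hi, hik⟩
      exact ⟨hi.1, (hb.le_iff_le hi hk').1 hik⟩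
    · rintro ⟨h1i, hik⟩
      have hi : i ∈ Set.Icc 1 g := ⟨h1i, hik.trans hk'.2⟩
      exact ⟨hi, (hb.le_iff_le hi hk').2 hik⟩
  rw [countLE, this, Nat.card_Icc, Nat.add_sub_cancel]

theorem countLE_le_of_forall_le {c k : ℕ} (hmax : ∀ i ∈ {i ∈ Icc 1 g | b i ≤ c}, i ≤ k) : countLE b g c ≤ k := by
  calc countLE b g c ≤ #(Icc 1 k) :=
        card_le_card fun i hi => mem_Icc.2 ⟨(mem_Icc.1 (mem_filter.1 hi).1).1, hmax i hi⟩
    _ = k := by rw [Nat.card_Icc, Nat.add_sub_cancel]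

theorem countLE_mul_le {a d : ℕ} (hratio : ∀ i, 1 ≤ i → i ≤ g → i * d ≤ a * b i) (c : ℕ) :
    countLE b g c * d ≤ c * a := by
  set s := {i ∈ Icc 1 g | b i ≤ c}
  rcases s.eq_empty_or_nonempty with hs | hs
  · simp [countLE, s, hs]
  obtain ⟨k, hks, hkmax⟩ := s.exists_max_image id hs
  obtain ⟨hk, hkc⟩ := mem_filter.1 hks
  rw [mem_Icc] at hk
  calc countLE b g c * d ≤ k * d := Nat.mul_le_mul_right d (countLE_le_of_forall_le hkmax)
    _ ≤ a * b k := hratio k hk.1 hk.2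
    _ ≤ a * c := Nat.mul_le_mul_left a hkc
    _ = c * a := Nat.mul_comm a c

end countLE

theorem stmt7_general (g : ℕ) (b : ℕ → ℕ)
    (hpos : ∀ i, 1 ≤ i → i ≤ g → 0 < b i)
    (hmono : ∀ i j, 1 ≤ i → i < j → j ≤ g → b i < b j)
    (f : ℕ → ℕ)
    (hf : ∀ c : ℕ, f c = ((Finset.Icc 1 g).filter (fun i => b i ≤ c)).card)
    (i₀ : ℕ) (hi₀1 : 1 ≤ i₀) (hi₀g : i₀ ≤ g)
    (hmax : ∀ i, 1 ≤ i → i ≤ g → (i : ℚ) / (b i : ℚ) ≤ (i₀ : ℚ) / (b i₀ : ℚ))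
    (N : ℕ) (hdvd : b i₀ ∣ N) :
    IsGreatest {S : ℕ | ∃ m : ℕ, ∃ cs : Fin m → ℕ, 1 ≤ m ∧
        (∑ j, cs j) ≤ N ∧ S = ∑ j, f (cs j)} (N / b i₀ * i₀) := by
  obtain rfl : f = countLE b g := funext hf
  have hb₀ : 0 < b i₀ := hpos i₀ hi₀1 hi₀g
  have hratio : ∀ i, 1 ≤ i → i ≤ g → i * b i₀ ≤ i₀ * b i := fun i hi hig => by
    have := (div_le_div_iff₀ (by exact_mod_cast hpos i hi hig) (by exact_mod_cast hb₀)).1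
      (hmax i hi hig)
    exact_mod_cast this
  have hb : StrictMonoOn b (Set.Icc 1 g) := fun i hi j hj hij => hmono i j hi.1 hij hj.2
  exact isGreatest_budgetedSums hb₀ hdvd (countLE_mul_le hratio) (countLE_zero hpos)
    (countLE_apply_of_strictMonoOn hb (mem_Icc.2 ⟨hi₀1, hi₀g⟩))

theorem stmt7 (g : ℕ) (hg : 1 ≤ g) (b : ℕ → ℕ)
    (hpos : ∀ i, 1 ≤ i → i ≤ g → 0 < b i)
    (hmono : ∀ i j, 1 ≤ i → i < j → j ≤ g → b i < b j)
    (f : ℕ → ℕ)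
    (hf : ∀ c : ℕ, f c = ((Finset.Icc 1 g).filter (fun i => b i ≤ c)).card)
    (i₀ : ℕ) (hi₀1 : 1 ≤ i₀) (hi₀g : i₀ ≤ g)
    (hmax : ∀ i, 1 ≤ i → i ≤ g → (i : ℚ) / (b i : ℚ) ≤ (i₀ : ℚ) / (b i₀ : ℚ))
    (N : ℕ) (hdvd : b i₀ ∣ N) :
    IsGreatest {S : ℕ | ∃ m : ℕ, ∃ cs : Fin m → ℕ, 1 ≤ m ∧
        (∑ j, cs j) ≤ N ∧ S = ∑ j, f (cs j)} (N / b i₀ * i₀) :=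
  stmt7_general g b hpos hmono f hf i₀ hi₀1 hi₀g hmax N hdvd
end

section
/- Let g ≥ 1, b₁ < ⋯ < b_g strictly increasing positive integers, f(c) = #{i : bᵢ ≤ c}, and define M(N) = max{∑_{j=1}^{n} f(cⱼ) : n ≥ 1, cⱼ ≥ 0 integers, ∑ cⱼ = N} for N ≥ 1. Then the sequence M(N)/N converges as N → ∞ to max_{1≤i≤g} i/bᵢ. -/
/-!
Write `L = i / bᵢ` for an index attaining the maximum. Since `b` is increasing, `f c = k > 0`
forces `b_k ≤ c`, so `f c ≤ (k / b_k) c ≤ L c` for every `c`, and hence `M(N) ≤ L N`.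
Conversely, cutting `N` into `⌊N / bᵢ⌋` parts equal to `bᵢ` and one remainder gives
`M(N) ≥ ⌊N / bᵢ⌋ i ≥ L N - i`. Dividing by `N` squeezes `M(N) / N` to `L`.
-/

open Finset Filter Topology

def compositionValues (f : ℕ → ℕ) (N : ℕ) : Set ℕ :=
  {S | ∃ m : ℕ, ∃ cs : Fin m → ℕ, 1 ≤ m ∧ (∑ j, cs j) = N ∧ S = ∑ j, f (cs j)}

theorem cast_le_mul_of_mem_compositionValues {f : ℕ → ℕ} {L : ℝ}
    (hfL : ∀ c, (f c : ℝ) ≤ L * c) {N S : ℕ} (hS : S ∈ compositionValues f N) :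
    (S : ℝ) ≤ L * N := by
  obtain ⟨m, cs, -, rfl, rfl⟩ := hS
  push_cast
  rw [Finset.mul_sum]
  exact Finset.sum_le_sum fun j _ => hfL (cs j)

theorem mul_add_mem_compositionValues (f : ℕ → ℕ) (q c r : ℕ) :
    q * f c + f r ∈ compositionValues f (q * c + r) := by
  refine ⟨q + 1, Fin.snoc (fun _ => c) r, Nat.le_add_left 1 q, ?_, ?_⟩ <;>
    simp [Fin.sum_univ_castSucc]

theorem sub_le_of_isGreatest_compositionValues {f : ℕ → ℕ} {N c a M : ℕ} (hc : 0 < c)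
    (ha : a ≤ f c) (hM : IsGreatest (compositionValues f N) M) :
    (a : ℝ) / c * N - a ≤ M := by
  have hmem := mul_add_mem_compositionValues f (N / c) c (N % c)
  rw [Nat.div_add_mod'] at hmem
  have hqM : N / c * a ≤ M :=
    (Nat.mul_le_mul_left _ ha).trans ((Nat.le_add_right _ _).trans (hM.2 hmem))
  have hN : (N : ℝ) < c * ((N / c : ℕ) + 1) := by exact_mod_cast Nat.lt_mul_div_succ N hc
  have hc' : (0 : ℝ) < c := by exact_mod_cast hc
  calc (a : ℝ) / c * N - a ≤ a / c * (c * ((N / c : ℕ) + 1)) - a := by gcongr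
    _ = (N / c : ℕ) * a := by field_simp; ring
    _ ≤ M := by exact_mod_cast hqM

section StepCount

variable {b : ℕ → ℕ} {g : ℕ}

theorem le_card_filter_le_apply (hb : MonotoneOn b (Set.Icc 1 g)) {i : ℕ}
    (hi : i ∈ Set.Icc 1 g) : i ≤ #{j ∈ Icc 1 g | b j ≤ b i} := by
  have hsub : Icc 1 i ⊆ {j ∈ Icc 1 g | b j ≤ b i} := by
    intro j hj
    rw [Finset.mem_Icc] at hj
    have hj' : j ∈ Set.Icc 1 g := ⟨hj.1, hj.2.trans hi.2⟩
    exact Finset.mem_filter.2 ⟨Finset.mem_Icc.2 hj', hb hj' hi hj.2⟩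
  simpa using Finset.card_le_card hsub

theorem apply_card_filter_le (hb : MonotoneOn b (Set.Icc 1 g)) {c : ℕ}
    (hk : 0 < #{j ∈ Icc 1 g | b j ≤ c}) : b #{j ∈ Icc 1 g | b j ≤ c} ≤ c := by
  set k := #{j ∈ Icc 1 g | b j ≤ c} with hk_def
  have hkg : k ≤ g := (Finset.card_filter_le _ _).trans (by simp)
  by_contra! hck
  -- an index `j ≥ k` in the filter would give `c < b k ≤ b j ≤ c`
  have hsub : {j ∈ Icc 1 g | b j ≤ c} ⊆ Icc 1 (k - 1) := by
    intro j hj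
    simp only [Finset.mem_filter, Finset.mem_Icc] at hj ⊢
    refine ⟨hj.1.1, Nat.le_sub_one_of_lt (lt_of_not_ge fun hkj => ?_)⟩
    exact (hck.trans_le (hb ⟨hk, hkg⟩ hj.1 hkj)).not_ge hj.2
  have := Finset.card_le_card hsub
  rw [← hk_def, Nat.card_Icc] at this
  omega

theorem card_filter_le_mul (hb : MonotoneOn b (Set.Icc 1 g)) {L : ℝ} (hL0 : 0 ≤ L)
    (hL : ∀ i ∈ Set.Icc 1 g, (i : ℝ) ≤ L * b i) (c : ℕ) :
    (#{j ∈ Icc 1 g | b j ≤ c} : ℝ) ≤ L * c := by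
  set k := #{j ∈ Icc 1 g | b j ≤ c}
  rcases Nat.eq_zero_or_pos k with hk | hk
  · rw [hk, Nat.cast_zero]
    positivity
  have hkg : k ≤ g := (Finset.card_filter_le _ _).trans (by simp)
  calc (k : ℝ) ≤ L * b k := hL k ⟨hk, hkg⟩
    _ ≤ L * c := by gcongr; exact_mod_cast apply_card_filter_le hb hk

end StepCount

theorem tendsto_div_of_sub_le_of_le {x : ℕ → ℝ} {L C : ℝ}
    (hlow : ∀ᶠ N in atTop, L * N - C ≤ x N) (hup : ∀ᶠ N in atTop, x N ≤ L * N) :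
    Tendsto (fun N : ℕ => x N / N) atTop (𝓝 L) := by
  have hlim : Tendsto (fun N : ℕ => L - C / N) atTop (𝓝 L) := by
    simpa using tendsto_const_nhds.sub (tendsto_const_div_atTop_nhds_zero_nat C)
  refine tendsto_of_tendsto_of_tendsto_of_le_of_le' hlim tendsto_const_nhds ?_ ?_
  · filter_upwards [hlow, eventually_ge_atTop 1] with N hN hN1
    have hNpos : (0 : ℝ) < N := by exact_mod_cast hN1
    rw [le_div_iff₀ hNpos, sub_mul, div_mul_cancel₀ _ hNpos.ne']
    exact hN
  · filter_upwards [hup, eventually_ge_atTop 1] with N hN hN1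
    have hNpos : (0 : ℝ) < N := by exact_mod_cast hN1
    rwa [div_le_iff₀ hNpos]

theorem stmt8_general (g : ℕ) (b : ℕ → ℕ)
    (hpos : ∀ i, 1 ≤ i → i ≤ g → 0 < b i)
    (hmono : ∀ i j, 1 ≤ i → i < j → j ≤ g → b i < b j)
    (f : ℕ → ℕ)
    (hf : ∀ c : ℕ, f c = ((Finset.Icc 1 g).filter (fun i => b i ≤ c)).card)
    (M : ℕ → ℕ)
    (hM : ∀ N : ℕ, 1 ≤ N →
      IsGreatest {S : ℕ | ∃ m : ℕ, ∃ cs : Fin m → ℕ, 1 ≤ m ∧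
        (∑ j, cs j) = N ∧ S = ∑ j, f (cs j)} (M N))
    (L : ℝ)
    (hL : IsGreatest {q : ℝ | ∃ i : ℕ, 1 ≤ i ∧ i ≤ g ∧ q = (i : ℝ) / (b i : ℝ)} L) :
    Filter.Tendsto (fun N : ℕ => (M N : ℝ) / (N : ℝ)) Filter.atTop (nhds L) := by
  obtain ⟨⟨i, hi1, hig, rfl⟩, hLub⟩ := hL
  have hb : MonotoneOn b (Set.Icc 1 g) := fun p hp q hq hpq =>
    hpq.eq_or_lt.elim (fun h => h ▸ le_rfl) fun h => (hmono p q hp.1 h hq.2).le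
  have hfL (c : ℕ) : (f c : ℝ) ≤ i / b i * c := by
    rw [hf]
    refine card_filter_le_mul hb (by positivity) (fun j hj => ?_) c
    have hbj : (0 : ℝ) < b j := by exact_mod_cast hpos j hj.1 hj.2
    exact (div_le_iff₀ hbj).1 (hLub ⟨j, hj.1, hj.2, rfl⟩)
  have hfi : i ≤ f (b i) := by
    rw [hf]
    exact le_card_filter_le_apply hb ⟨hi1, hig⟩
  apply tendsto_div_of_sub_le_of_le (C := i)
  · filter_upwards [eventually_ge_atTop 1] with N hN
    exact sub_le_of_isGreatest_compositionValues (hpos i hi1 hig) hfi (hM N hN)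
  · filter_upwards [eventually_ge_atTop 1] with N hN
    exact cast_le_mul_of_mem_compositionValues hfL (hM N hN).1

theorem stmt8 (g : ℕ) (hg : 1 ≤ g) (b : ℕ → ℕ)
    (hpos : ∀ i, 1 ≤ i → i ≤ g → 0 < b i)
    (hmono : ∀ i j, 1 ≤ i → i < j → j ≤ g → b i < b j)
    (f : ℕ → ℕ)
    (hf : ∀ c : ℕ, f c = ((Finset.Icc 1 g).filter (fun i => b i ≤ c)).card)
    (M : ℕ → ℕ)
    (hM : ∀ N : ℕ, 1 ≤ N →
      IsGreatest {S : ℕ | ∃ m : ℕ, ∃ cs : Fin m → ℕ, 1 ≤ m ∧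
        (∑ j, cs j) = N ∧ S = ∑ j, f (cs j)} (M N))
    (L : ℝ)
    (hL : IsGreatest {q : ℝ | ∃ i : ℕ, 1 ≤ i ∧ i ≤ g ∧ q = (i : ℝ) / (b i : ℝ)} L) :
    Filter.Tendsto (fun N : ℕ => (M N : ℝ) / (N : ℝ)) Filter.atTop (nhds L) :=
  stmt8_general g b hpos hmono f hf M hM L hL
end

section
/- Let f : ℕ → ℕ be the step function f(c) = #{i ∈ {1,…,g} : bᵢ ≤ c} for strictly increasing positive integers b₁ < ⋯ < b_g, and let i₀ ∈ {1,…,g} maximize i/bᵢ. Then for every n ≥ 1 and every choice of nonnegative integers c₁, …, c_n with ∑ cⱼ = n − 1, one has ∑_{j=1}^n f(cⱼ) ≤ (n − 1)·i₀/b_{i₀} (as an inequality of rationals). -/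
open Finset

lemma Finset.card_le_max'_of_pos {s : Finset ℕ} (hs : s.Nonempty) (hpos : ∀ i ∈ s, 1 ≤ i) :
    #s ≤ s.max' hs := by
  calc #s ≤ #(Icc 1 (s.max' hs)) :=
        card_le_card fun i hi => mem_Icc.mpr ⟨hpos i hi, le_max' s i hi⟩
    _ = s.max' hs := by simp

lemma card_filter_Icc_le_mul_of_div_le {g : ℕ} {b : ℕ → ℕ} {r : ℚ}
    (hpos : ∀ i, 1 ≤ i → i ≤ g → 0 < b i) (hr : ∀ i, 1 ≤ i → i ≤ g → (i : ℚ) / b i ≤ r)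
    (hr₀ : 0 ≤ r) (c : ℕ) :
    (#{i ∈ Icc 1 g | b i ≤ c} : ℚ) ≤ c * r := by
  set s := {i ∈ Icc 1 g | b i ≤ c}
  rcases s.eq_empty_or_nonempty with hs | hs
  · rw [hs, card_empty, Nat.cast_zero]
    positivity
  obtain ⟨hm, hbm⟩ := mem_filter.mp (s.max'_mem hs)
  obtain ⟨hm₁, hmg⟩ := mem_Icc.mp hm
  set m := s.max' hs
  have hcard : #s ≤ m := card_le_max'_of_pos hs fun i hi => (mem_Icc.mp (mem_filter.mp hi).1).1
  have hbm₀ : (0 : ℚ) < b m := by exact_mod_cast hpos m hm₁ hmg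
  calc (#s : ℚ) ≤ m := by exact_mod_cast hcard
    _ = b m * (m / b m) := by field_simp
    _ ≤ c * r := mul_le_mul (by exact_mod_cast hbm) (hr m hm₁ hmg) (by positivity) (by positivity)

theorem stmt16_general (g : ℕ) (b : ℕ → ℕ)
    (hpos : ∀ i, 1 ≤ i → i ≤ g → 0 < b i)
    (f : ℕ → ℕ)
    (hf : ∀ c : ℕ, f c = ((Finset.Icc 1 g).filter (fun i => b i ≤ c)).card)
    (i₀ : ℕ)
    (hmax : ∀ i, 1 ≤ i → i ≤ g → (i : ℚ) / (b i : ℚ) ≤ (i₀ : ℚ) / (b i₀ : ℚ)) :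
    ∀ n : ℕ, 1 ≤ n → ∀ cs : Fin n → ℕ, (∑ j, cs j) = n - 1 →
      ((∑ j, f (cs j) : ℕ) : ℚ) ≤ ((n : ℚ) - 1) * (i₀ : ℚ) / (b i₀ : ℚ) := by
  intro n hn cs hsum
  set r : ℚ := i₀ / b i₀
  have hbound : ∀ c, (f c : ℚ) ≤ c * r := fun c => by
    rw [hf c]
    exact card_filter_Icc_le_mul_of_div_le hpos hmax (by positivity) c
  have hsum' : (∑ j, (cs j : ℚ)) = n - 1 := by
    rw [← Nat.cast_sum, hsum, Nat.cast_sub hn, Nat.cast_one]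
  calc ((∑ j, f (cs j) : ℕ) : ℚ) = ∑ j, (f (cs j) : ℚ) := Nat.cast_sum _ _
    _ ≤ ∑ j, (cs j : ℚ) * r := sum_le_sum fun j _ => hbound (cs j)
    _ = (n - 1) * r := by rw [← sum_mul, hsum']
    _ = (n - 1) * i₀ / b i₀ := mul_div_assoc _ _ _ |>.symm

theorem stmt16 (g : ℕ) (hg : 1 ≤ g) (b : ℕ → ℕ)
    (hpos : ∀ i, 1 ≤ i → i ≤ g → 0 < b i)
    (hmono : ∀ i j, 1 ≤ i → i < j → j ≤ g → b i < b j)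
    (f : ℕ → ℕ)
    (hf : ∀ c : ℕ, f c = ((Finset.Icc 1 g).filter (fun i => b i ≤ c)).card)
    (i₀ : ℕ) (hi₀1 : 1 ≤ i₀) (hi₀g : i₀ ≤ g)
    (hmax : ∀ i, 1 ≤ i → i ≤ g → (i : ℚ) / (b i : ℚ) ≤ (i₀ : ℚ) / (b i₀ : ℚ)) :
    ∀ n : ℕ, 1 ≤ n → ∀ cs : Fin n → ℕ, (∑ j, cs j) = n - 1 →
      ((∑ j, f (cs j) : ℕ) : ℚ) ≤ ((n : ℚ) - 1) * (i₀ : ℚ) / (b i₀ : ℚ) :=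
  stmt16_general g b hpos f hf i₀ hmax
end
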